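/- Let b, c > 0, p > 1, t_max ∈ (0,∞], and let φ : [0,t_max) → ℝ be a C¹ function satisfying φ'(t) ≥ b·φ(t)^p − c for all t ∈ (0,t_max), and suppose b·φ(0)^p − c ≥ (b/2)·φ(0)^p and φ(0) > 0. Then φ'(t) ≥ (b/2)·φ(t)^p for all t ∈ (0,t_max), and consequently t_max < ∞. -/

import Mathlib

/-!
Since `φ' ≥ bφ^p - c` and `bφ(0)^p - c > 0`, every level `m` slightly below `φ(0)` satisfies
`bm^p - c > 0`, so `φ` is strictly increasing whenever it touches `m` and can never cross it;
hence `φ ≥ φ(0)`, and then `bφ^p - c ≥ bφ^p - (b/2)φ(0)^p ≥ (b/2)φ^p`.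
For finiteness of `t_max`, `φ' ≥ kφ^p` with `p > 1` makes `φ^(1-p) + (p-1)kt` nonincreasing,
which is impossible for all `t ≥ 0` since `φ^(1-p) > 0`.
-/

open Set Filter Topology

theorem le_of_hasDerivAt_pos_of_eq {f f' : ℝ → ℝ} {a b m : ℝ}
    (hf : ∀ x ∈ Icc a b, HasDerivAt f (f' x) x) (ha : m < f a)
    (hcross : ∀ x ∈ Ioo a b, f x = m → 0 < f' x) :
    ∀ x ∈ Icc a b, m ≤ f x := by
  refine image_le_of_deriv_right_lt_deriv_boundary' (f' := 0) continuousOn_const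
    (fun x _ => hasDerivWithinAt_const x _ m) ha.le
    (fun x hx => (hf x hx).continuousAt.continuousWithinAt)
    (fun x hx => (hf x (Ico_subset_Icc_self hx)).hasDerivWithinAt) ?_
  rintro x ⟨hax, hxb⟩ hx
  rcases hax.eq_or_lt with rfl | hax
  · exact absurd hx ha.ne
  · exact hcross x ⟨hax, hxb⟩ hx.symm

theorem le_of_comp_le_deriv {f f' g : ℝ → ℝ} {a b : ℝ}
    (hf : ∀ x ∈ Icc a b, HasDerivAt f (f' x) x) (hg : ContinuousAt g (f a))
    (hga : 0 < g (f a)) (hf' : ∀ x ∈ Ioo a b, g (f x) ≤ f' x) :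
    ∀ x ∈ Icc a b, f a ≤ f x := by
  intro x hx
  by_contra! hlt
  have hlevels : ∀ᶠ m in 𝓝[<] f a, 0 < g m ∧ m ∈ Ioo (f x) (f a) :=
    ((hg.eventually (lt_mem_nhds hga)).filter_mono nhdsWithin_le_nhds).and (Ioo_mem_nhdsLT hlt)
  obtain ⟨m, hgm, hxm, hma⟩ := hlevels.exists
  have hmx : m ≤ f x := le_of_hasDerivAt_pos_of_eq hf hma
    (fun y hy hym => hgm.trans_le (hym ▸ hf' y hy)) x hx
  exact hxm.not_ge hmx

theorem antitoneOn_rpow_one_sub_add_mul {f f' : ℝ → ℝ} {k p : ℝ} (hp : 1 < p)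
    (hf : ∀ t ∈ Ici (0 : ℝ), HasDerivAt f (f' t) t) (hpos : ∀ t ∈ Ici (0 : ℝ), 0 < f t)
    (hf' : ∀ t ∈ Ioi (0 : ℝ), k * f t ^ p ≤ f' t) :
    AntitoneOn (fun t => f t ^ (1 - p) + (p - 1) * k * t) (Ici 0) := by
  have hderiv : ∀ t ∈ Ici (0 : ℝ), HasDerivAt (fun t => f t ^ (1 - p) + (p - 1) * k * t)
      (f' t * (1 - p) * f t ^ (-p) + (p - 1) * k) t := by
    intro t ht
    have h := ((hf t ht).rpow_const (p := 1 - p) (Or.inl (hpos t ht).ne')).add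
      ((hasDerivAt_id' t).const_mul ((p - 1) * k))
    rwa [sub_sub_cancel_left, mul_one] at h
  refine antitoneOn_of_hasDerivWithinAt_nonpos (convex_Ici 0)
    (fun t ht => (hderiv t ht).continuousAt.continuousWithinAt)
    (fun t ht => (hderiv t (interior_subset ht)).hasDerivWithinAt) ?_
  intro t ht
  rw [interior_Ici] at ht
  have hfp : 0 < f t ^ p := Real.rpow_pos_of_pos (hpos t (mem_Ici.2 ht.le)) p
  have hk : k ≤ f' t * f t ^ (-p) := by
    rw [Real.rpow_neg (hpos t (mem_Ici.2 ht.le)).le, ← div_eq_mul_inv, le_div_iff₀ hfp]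
    exact hf' t ht
  have hscaled : (p - 1) * k ≤ (p - 1) * (f' t * f t ^ (-p)) :=
    mul_le_mul_of_nonneg_left hk (sub_pos.2 hp).le
  linarith

theorem not_forall_hasDerivAt_of_rpow_le_deriv {f f' : ℝ → ℝ} {k p : ℝ} (hk : 0 < k)
    (hp : 1 < p) (hf : ∀ t ∈ Ici (0 : ℝ), HasDerivAt f (f' t) t)
    (hpos : ∀ t ∈ Ici (0 : ℝ), 0 < f t) (hf' : ∀ t ∈ Ioi (0 : ℝ), k * f t ^ p ≤ f' t) :
    False := by
  have hanti := antitoneOn_rpow_one_sub_add_mul hp hf hpos hf'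
  have hck : 0 < (p - 1) * k := mul_pos (sub_pos.2 hp) hk
  set T := f 0 ^ (1 - p) / ((p - 1) * k) with hT
  have hT0 : 0 ≤ T := div_nonneg (Real.rpow_nonneg (hpos 0 self_mem_Ici).le _) hck.le
  have hgT := hanti self_mem_Ici hT0 hT0
  have hfT : 0 < f T ^ (1 - p) := Real.rpow_pos_of_pos (hpos T hT0) _
  have hcT : (p - 1) * k * T = f 0 ^ (1 - p) := by
    rw [hT, mul_div_cancel₀ _ hck.ne']
  simp only [mul_zero, add_zero] at hgT
  linarith

theorem stmt15_general (b c p : ℝ) (hb : 0 < b) (hp : 1 < p)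
    (tmax : EReal) (φ φ' : ℝ → ℝ)
    (hderiv : ∀ t : ℝ, 0 ≤ t → (t : EReal) < tmax → HasDerivAt φ (φ' t) t)
    (hODI : ∀ t : ℝ, 0 < t → (t : EReal) < tmax → b * φ t ^ p - c ≤ φ' t)
    (hinit : b / 2 * φ 0 ^ p ≤ b * φ 0 ^ p - c) (hφ0 : 0 < φ 0) :
    (∀ t : ℝ, 0 < t → (t : EReal) < tmax → b / 2 * φ t ^ p ≤ φ' t) ∧
      tmax < ⊤ := by
  have hφ0_le : ∀ t : ℝ, 0 ≤ t → (t : EReal) < tmax → φ 0 ≤ φ t := by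
    intro t ht htmax
    have hlt : ∀ x ∈ Icc 0 t, (x : EReal) < tmax :=
      fun x hx => (EReal.coe_le_coe_iff.2 hx.2).trans_lt htmax
    refine le_of_comp_le_deriv (g := fun y => b * y ^ p - c)
      (fun x hx => hderiv x hx.1 (hlt x hx))
      (((continuousAt_id.rpow_const (Or.inl hφ0.ne')).const_mul b).sub continuousAt_const)
      (hinit.trans_lt' (by positivity))
      (fun x hx => hODI x hx.1 (hlt x (Ioo_subset_Icc_self hx))) t ⟨ht, le_rfl⟩
  have hgrowth : ∀ t : ℝ, 0 < t → (t : EReal) < tmax → b / 2 * φ t ^ p ≤ φ' t := by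
    intro t ht htmax
    have hpow : φ 0 ^ p ≤ φ t ^ p :=
      Real.rpow_le_rpow hφ0.le (hφ0_le t ht.le htmax) (by linarith)
    nlinarith [hODI t ht htmax]
  refine ⟨hgrowth, lt_top_iff_ne_top.2 fun htop => ?_⟩
  subst htop
  exact not_forall_hasDerivAt_of_rpow_le_deriv (half_pos hb) hp
    (fun t ht => hderiv t ht (EReal.coe_lt_top t))
    (fun t ht => hφ0.trans_le (hφ0_le t ht (EReal.coe_lt_top t)))
    (fun t ht => hgrowth t ht (EReal.coe_lt_top t))

theorem stmt15 (b c p : ℝ) (hb : 0 < b) (hc : 0 < c) (hp : 1 < p)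
    (tmax : EReal) (htmax : 0 < tmax) (φ φ' : ℝ → ℝ)
    (hderiv : ∀ t : ℝ, 0 ≤ t → (t : EReal) < tmax → HasDerivAt φ (φ' t) t)
    (hφ'cont : ContinuousOn φ' {t : ℝ | 0 ≤ t ∧ (t : EReal) < tmax})
    (hODI : ∀ t : ℝ, 0 < t → (t : EReal) < tmax → b * φ t ^ p - c ≤ φ' t)
    (hinit : b / 2 * φ 0 ^ p ≤ b * φ 0 ^ p - c) (hφ0 : 0 < φ 0) :
    (∀ t : ℝ, 0 < t → (t : EReal) < tmax → b / 2 * φ t ^ p ≤ φ' t) ∧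
      tmax < ⊤ :=
  stmt15_general b c p hb hp tmax φ φ' hderiv hODI hinit hφ0
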